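/- Let d ≥ 2 and let u ∈ [0,1]^d with u_1 ≤ ⋯ ≤ u_d be a point such that |C(u) − C(u_π)| = (d−1)/(d+1) for some d-copula C and some permutation π ∈ S_d. Then, writing ũ_i := u_i − (d−1)/(d+1), one has 0 ≤ ũ_i ≤ 2/(d+1) for all i, and Σ_{i = ⌈d/2⌉+1}^{d} ũ_i = (d−1)/(d+1). -/

import Mathlib

/-- A `d`-copula: a function `C : [0,1]^d → ℝ` (defined on all of `(Fin d → ℝ)`,
with the copula conditions imposed on `[0,1]^d`) that is grounded, has uniform
one-dimensional margins, and is `d`-increasing. -/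
def IsCopula (d : ℕ) (C : (Fin d → ℝ) → ℝ) : Prop :=
  (∀ u : Fin d → ℝ, (∀ i, u i ∈ Set.Icc (0:ℝ) 1) → (∃ i, u i = 0) → C u = 0) ∧
  (∀ u : Fin d → ℝ, (∀ i, u i ∈ Set.Icc (0:ℝ) 1) →
    ∀ i : Fin d, (∀ j, j ≠ i → u j = 1) → C u = u i) ∧
  (∀ a b : Fin d → ℝ, (∀ i, a i ∈ Set.Icc (0:ℝ) 1) → (∀ i, b i ∈ Set.Icc (0:ℝ) 1) →
    (∀ i, a i ≤ b i) →
    0 ≤ ∑ S : Finset (Fin d),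
        (-1 : ℝ) ^ (d - S.card) * C (fun k => if k ∈ S then b k else a k))

/-!
The Fréchet–Hoeffding bounds `max 0 (∑ x - (d - 1)) ≤ C x ≤ min x`, applied to `u` and `u ∘ π`
(same minimum `u 0`, same coordinate sum), give `t ≤ u 0` and `∑_{i ≠ 0} (u i - t) ≤ t`, where
`t = (d - 1) / (d + 1)`. A copula is `1`-Lipschitz for the `ℓ¹` distance, in the one-sided form
`C b ≤ C a + ∑ (b i - a i)⁺`, so `|C u - C (u ∘ π)| ≤ ∑ |u i - c|` for every `c`; at the median
`c` of the sorted `u` this is at most the sum of `u i - t` over the upper half. The sum over the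
upper half is squeezed between these two bounds.
-/

open Finset Function

theorem le_of_forall_le_update {ι α β : Type*} [Fintype ι] [DecidableEq ι] [Preorder α]
    [Preorder β] {s : Set α} {f : (ι → α) → β}
    (hf : ∀ y, (∀ i, y i ∈ s) → ∀ j, ∀ r ∈ s, y j ≤ r → f y ≤ f (update y j r))
    {x y : ι → α} (hx : ∀ i, x i ∈ s) (hy : ∀ i, y i ∈ s) (hxy : x ≤ y) : f x ≤ f y := by
  suffices ∀ S : Finset ι, f x ≤ f (S.piecewise y x) by simpa using this univ
  intro S
  induction S using Finset.induction_on with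
  | empty => simp
  | insert j S hjS ih =>
    have hmem : ∀ i, S.piecewise y x i ∈ s := fun i =>
      S.piecewise_cases y x (fun v : α => v ∈ s) (hy i) (hx i)
    refine ih.trans ?_
    rw [piecewise_insert]
    exact hf _ hmem j (y j) (hy j) (by simpa [hjS] using hxy j)

theorem sum_max_sub_le_sum_abs_sub {ι : Type*} [Fintype ι] (f : ι → ℝ) (σ τ : Equiv.Perm ι)
    (c : ℝ) : ∑ i, max (f (σ i) - f (τ i)) 0 ≤ ∑ i, |f i - c| :=
  calc ∑ i, max (f (σ i) - f (τ i)) 0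
      ≤ ∑ i, (max (f (σ i) - c) 0 + max (-(f (τ i) - c)) 0) :=
        sum_le_sum fun i _ => max_le
          (by linarith [le_max_left (f (σ i) - c) 0, le_max_left (-(f (τ i) - c)) 0])
          (by positivity)
    _ = ∑ i, (max (f i - c) 0 + max (-(f i - c)) 0) := by
        rw [sum_add_distrib, sum_add_distrib, Equiv.sum_comp σ fun i => max (f i - c) 0,
          Equiv.sum_comp τ fun i => max (-(f i - c)) 0]
    _ = ∑ i, |f i - c| := by simp_rw [max_zero_add_max_neg_zero_eq_abs_self]

theorem Monotone.sum_abs_sub_le_sum_upper_half {d : ℕ} {w : Fin d → ℝ} (hw : Monotone w)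
    (hw0 : 0 ≤ w) (k : Fin d) (hk : (k : ℕ) = d - (d + 1) / 2) :
    ∑ i, |w i - w k| ≤ ∑ i ∈ univ.filter (fun i : Fin d => (d + 1) / 2 ≤ (i : ℕ)), w i := by
  set m := (d + 1) / 2
  have hle : ∀ i j : Fin d, (i : ℕ) ≤ j → w i ≤ w j := fun i j h => hw (Fin.le_def.2 h)
  have hcard_lt : #{i : Fin d | (i : ℕ) < k} = k := by rw [Fin.card_filter_val_lt]; omega
  have hcard_ge : #{i : Fin d | m ≤ (i : ℕ)} = k := by
    have := card_filter_add_card_filter_not (s := univ) fun i : Fin d => (i : ℕ) < m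
    simp only [not_lt, Fin.card_filter_val_lt, card_univ, Fintype.card_fin] at this
    omega
  calc ∑ i, |w i - w k|
      ≤ ∑ i : Fin d,
          ((if m ≤ (i : ℕ) then w i - w k else 0) + if (i : ℕ) < k then w k else 0) := by
        refine sum_le_sum fun i _ => abs_sub_le_iff.2 ?_
        have : 0 ≤ w i := hw0 i
        by_cases h₁ : m ≤ (i : ℕ)
        · have := hle k i (by omega)
          simp only [h₁, if_true, show ¬(i : ℕ) < k by omega, if_false]
          constructor <;> linarith
        by_cases h₂ : (i : ℕ) < k
        · have := hle i k h₂.le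
          simp only [h₁, h₂, if_true, if_false]
          constructor <;> linarith
        · have := hle i k (by omega)
          have := hle k i (by omega)
          simp only [h₁, h₂, if_false]
          constructor <;> linarith
    _ = ∑ i ∈ univ.filter (fun i : Fin d => m ≤ (i : ℕ)), w i := by
        rw [sum_add_distrib, ← sum_filter, ← sum_filter, sum_sub_distrib, sum_const, sum_const,
          hcard_lt, hcard_ge]
        ring

namespace IsCopula

variable {d : ℕ} {C : (Fin d → ℝ) → ℝ} (hC : IsCopula d C)
include hC

theorem sum_powerset_nonneg {x a b : Fin d → ℝ}
    (hx : ∀ i, x i ∈ Set.Icc (0:ℝ) 1) (ha : ∀ i, a i ∈ Set.Icc (0:ℝ) 1)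
    (hb : ∀ i, b i ∈ Set.Icc (0:ℝ) 1) (hab : a ≤ b) (J : Finset (Fin d)) :
    0 ≤ ∑ T ∈ J.powerset, (-1 : ℝ) ^ (#J - #T) * C (J.piecewise (T.piecewise b a) x) := by
  have hlo : ∀ i, J.piecewise a 0 i ∈ Set.Icc (0:ℝ) 1 := fun i => by
    by_cases hi : i ∈ J <;> simp [hi, ha i]
  have hhi : ∀ i, J.piecewise b x i ∈ Set.Icc (0:ℝ) 1 := fun i => by
    by_cases hi : i ∈ J <;> simp [hi, hb i, hx i]
  have hle : ∀ i, J.piecewise a 0 i ≤ J.piecewise b x i := fun i => by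
    by_cases hi : i ∈ J <;> simp [hi, hab i, (hx i).1]
  refine (hC.2.2 _ _ hlo hhi hle).trans_eq ?_
  -- the lower corner vanishes off `J`, so only the vertices `S ⊇ Jᶜ` avoid the zero faces;
  -- they correspond to `S ∩ J ⊆ J`
  rw [← sum_filter_of_ne (p := fun S => Jᶜ ⊆ S)]
  · refine sum_nbij' (· ∩ J) (· ∪ Jᶜ) (by simp) (by simp) ?_ ?_ ?_
    · intro S hS
      rw [mem_filter_univ] at hS
      ext k
      by_cases hk : k ∈ J
      · simp [hk]
      · simpa [hk] using hS (mem_compl.2 hk)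
    · intro T hT
      rw [mem_powerset] at hT
      rw [union_inter_distrib_right, inter_comm Jᶜ, inter_compl, union_empty, inter_eq_left.2 hT]
    · intro S hS
      rw [mem_filter_univ] at hS
      have hcard : #S = #(S ∩ J) + (d - #J) := by
        rw [← card_inter_add_card_sdiff S J, sdiff_eq_inter_compl, inter_eq_right.2 hS,
          card_compl, Fintype.card_fin]
      congr 1
      · congr 1
        have : #J ≤ d := by simpa using card_le_univ J
        omega
      · congr 1
        ext k
        by_cases hkJ : k ∈ J
        · by_cases hkS : k ∈ S <;> simp [hkJ, hkS]
        · simp [hkJ, hS (mem_compl.2 hkJ)]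
  · intro S _ hS
    by_contra hJS
    obtain ⟨k, hkJ, hkS⟩ := not_subset.1 hJS
    refine hS (mul_eq_zero_of_right _ (hC.1 _ ?_ ⟨k, ?_⟩))
    · intro i; by_cases hi : i ∈ S
      · simp only [hi, if_true, hhi]
      · simp only [hi, if_false, hlo]
    · simp [hkS, mem_compl.1 hkJ]

theorem le_update {x : Fin d → ℝ} (hx : ∀ i, x i ∈ Set.Icc (0:ℝ) 1) (i : Fin d) {r : ℝ}
    (hxr : x i ≤ r) (hr : r ≤ 1) : C x ≤ C (update x i r) := by
  have hb : ∀ k, update x i r k ∈ Set.Icc (0:ℝ) 1 := fun k => by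
    rcases eq_or_ne k i with rfl | hk
    · simpa using ⟨(hx k).1.trans hxr, hr⟩
    · simpa [hk] using hx k
  have hab : x ≤ update x i r := fun k => by
    rcases eq_or_ne k i with rfl | hk <;> simp [*]
  have := hC.sum_powerset_nonneg hx hx hb hab (insert i ∅)
  simp only [sum_powerset_insert (notMem_empty i), powerset_empty, sum_singleton,
    piecewise_insert, piecewise_empty] at this
  simpa using this

theorem sub_le_sub_update {y : Fin d → ℝ} (hy : ∀ i, y i ∈ Set.Icc (0:ℝ) 1) {i j : Fin d}
    (hij : i ≠ j) {p q s : ℝ} (hp : 0 ≤ p) (hpq : p ≤ q) (hq : q ≤ 1) (hys : y j ≤ s) (hs : s ≤ 1) :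
    C (update y i q) - C (update y i p) ≤
      C (update (update y j s) i q) - C (update (update y j s) i p) := by
  have ha : ∀ k, update y i p k ∈ Set.Icc (0:ℝ) 1 := fun k => by
    rcases eq_or_ne k i with rfl | hk
    · simpa using ⟨hp, hpq.trans hq⟩
    · simpa [hk] using hy k
  have hb : ∀ k, update (update y j s) i q k ∈ Set.Icc (0:ℝ) 1 := fun k => by
    rcases eq_or_ne k i with rfl | hki
    · simpa using ⟨hp.trans hpq, hq⟩
    rcases eq_or_ne k j with rfl | hkj
    · simpa [hki] using ⟨(hy k).1.trans hys, hs⟩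
    · simpa [hki, hkj] using hy k
  have hab : update y i p ≤ update (update y j s) i q := fun k => by
    rcases eq_or_ne k i with rfl | hki
    · simpa using hpq
    rcases eq_or_ne k j with rfl | hkj <;> simp [*]
  have := hC.sum_powerset_nonneg hy ha hb hab (insert i (insert j ∅))
  have hi : i ∉ insert j (∅ : Finset (Fin d)) := by simpa using hij
  simp only [sum_powerset_insert hi, sum_powerset_insert (notMem_empty j),
    powerset_empty, sum_singleton, piecewise_insert, piecewise_empty] at this
  simp only [insert_empty_eq, mem_singleton, hij, not_false_eq_true, card_insert_of_notMem,
    card_singleton, Nat.reduceAdd, card_empty, tsub_zero, even_two, Even.neg_pow, one_pow, ne_eq,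
    hij.symm, update_of_ne, update_eq_self, update_self, one_mul, Nat.add_one_sub_one, pow_one,
    neg_mul, tsub_self, pow_zero, update_comm hij] at this
  linarith

theorem apply_update_one {i : Fin d} {r : ℝ} (hr : r ∈ Set.Icc (0:ℝ) 1) :
    C (update 1 i r) = r := by
  have hbox : ∀ k, update (1 : Fin d → ℝ) i r k ∈ Set.Icc (0:ℝ) 1 := fun k => by
    rcases eq_or_ne k i with rfl | hk <;> simp [*]
  simpa using hC.2.1 _ hbox i fun k hk => by simp [hk]

theorem update_sub_le {y : Fin d → ℝ} (hy : ∀ i, y i ∈ Set.Icc (0:ℝ) 1) (j : Fin d) {r : ℝ}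
    (hyr : y j ≤ r) (hr : r ≤ 1) : C (update y j r) - C y ≤ r - y j := by
  set g : (Fin d → ℝ) → ℝ := fun z => C (update z j r) - C (update z j (y j))
  -- raising the other coordinates to `1` only increases the `j`-th increment of `C`
  have hg : g y ≤ g 1 := by
    refine le_of_forall_le_update (s := Set.Icc 0 1) (fun z hz k s hs hzs => ?_) hy
      (fun _ => by simp) (fun i => (hy i).2)
    rcases eq_or_ne k j with rfl | hkj
    · simp [g]
    · exact hC.sub_le_sub_update hz hkj.symm (hy j).1 hyr hr hzs hs.2
  have hr0 : r ∈ Set.Icc (0:ℝ) 1 := ⟨(hy j).1.trans hyr, hr⟩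
  simpa [g, hC.apply_update_one hr0, hC.apply_update_one (hy j)] using hg

theorem mono {a b : Fin d → ℝ} (ha : ∀ i, a i ∈ Set.Icc (0:ℝ) 1)
    (hb : ∀ i, b i ∈ Set.Icc (0:ℝ) 1) (hab : a ≤ b) : C a ≤ C b :=
  le_of_forall_le_update (fun _ hy j _ hr hyr => hC.le_update hy j hyr hr.2) ha hb hab

theorem sub_le_sum_sub {a b : Fin d → ℝ} (ha : ∀ i, a i ∈ Set.Icc (0:ℝ) 1)
    (hb : ∀ i, b i ∈ Set.Icc (0:ℝ) 1) (hab : a ≤ b) : C b - C a ≤ ∑ i, (b i - a i) := by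
  have key : ∑ i, a i - C a ≤ ∑ i, b i - C b := by
    refine le_of_forall_le_update (f := fun y : Fin d → ℝ => ∑ i, y i - C y)
      (fun y hy j r hr hyr => ?_) ha hb hab
    have hsum : ∑ i, update y j r i = ∑ i, y i + (r - y j) := by
      rw [sum_update_of_mem (mem_univ j), ← add_sum_erase _ _ (mem_univ j),
        sdiff_singleton_eq_erase]
      ring
    linarith [hC.update_sub_le hy j hyr hr.2]
  rw [sum_sub_distrib]
  linarith

theorem le_add_sum_max_sub {a b : Fin d → ℝ} (ha : ∀ i, a i ∈ Set.Icc (0:ℝ) 1)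
    (hb : ∀ i, b i ∈ Set.Icc (0:ℝ) 1) : C b ≤ C a + ∑ i, max (b i - a i) 0 := by
  have hab : ∀ i, (a ⊓ b) i ∈ Set.Icc (0:ℝ) 1 := fun i =>
    ⟨le_inf (ha i).1 (hb i).1, inf_le_left.trans (ha i).2⟩
  have h1 := hC.sub_le_sum_sub hab hb inf_le_right
  have h2 := hC.mono hab ha inf_le_left
  have hsum : ∑ i, (b i - (a ⊓ b) i) = ∑ i, max (b i - a i) 0 := by
    simp [Pi.inf_apply, sub_inf]
  linarith

theorem mem_Icc {x : Fin d → ℝ} (hx : ∀ i, x i ∈ Set.Icc (0:ℝ) 1) (i : Fin d) :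
    C x ∈ Set.Icc (max 0 (∑ j, x j - (d - 1))) (x i) := by
  have h1 : ∀ j, (1 : Fin d → ℝ) j ∈ Set.Icc (0:ℝ) 1 := fun _ => by simp
  have hupper : ∀ j, update (1 : Fin d → ℝ) i (x i) j ∈ Set.Icc (0:ℝ) 1 := fun j => by
    rcases eq_or_ne j i with rfl | hj <;> simp [*]
  have hzero : ∀ j, update x i 0 j ∈ Set.Icc (0:ℝ) 1 := fun j => by
    rcases eq_or_ne j i with rfl | hj <;> simp [*]
  refine ⟨max_le ?_ ?_, ?_⟩
  · calc (0:ℝ) = C (update x i 0) := (hC.1 _ hzero ⟨i, by simp⟩).symm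
      _ ≤ C x := hC.mono hzero hx fun j => by
          rcases eq_or_ne j i with rfl | hj <;> simp [*, (hx j).1]
  · have := hC.sub_le_sum_sub hx h1 fun j => (hx j).2
    rw [← update_eq_self i (1 : Fin d → ℝ), hC.apply_update_one (by simp), update_eq_self] at this
    simp only [Pi.one_apply, sum_sub_distrib, sum_const, card_univ, Fintype.card_fin,
      nsmul_eq_mul, mul_one] at this
    linarith
  · calc C x ≤ C (update 1 i (x i)) := hC.mono hx hupper fun j => by
          rcases eq_or_ne j i with rfl | hj <;> simp [*, (hx j).2]
      _ = x i := hC.apply_update_one (hx i)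

theorem abs_sub_comp_perm_le {x : Fin d → ℝ} (hx : ∀ i, x i ∈ Set.Icc (0:ℝ) 1)
    (π : Equiv.Perm (Fin d)) (c : ℝ) : |C x - C (x ∘ π)| ≤ ∑ i, |x i - c| := by
  have hxπ : ∀ i, (x ∘ π) i ∈ Set.Icc (0:ℝ) 1 := fun i => hx (π i)
  have h₁ : ∑ i, max (x i - x (π i)) 0 ≤ ∑ i, |x i - c| :=
    sum_max_sub_le_sum_abs_sub x 1 π c
  have h₂ : ∑ i, max (x (π i) - x i) 0 ≤ ∑ i, |x i - c| :=
    sum_max_sub_le_sum_abs_sub x π 1 c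
  have h₃ := hC.le_add_sum_max_sub hxπ hx
  have h₄ := hC.le_add_sum_max_sub hx hxπ
  simp only [Function.comp_apply] at h₃ h₄
  exact abs_sub_le_iff.2 ⟨by linarith, by linarith⟩

theorem abs_sub_comp_perm_le_sub {x : Fin d → ℝ} (hx : ∀ i, x i ∈ Set.Icc (0:ℝ) 1)
    (π : Equiv.Perm (Fin d)) (i : Fin d) :
    |C x - C (x ∘ π)| ≤ x i - max 0 (∑ j, x j - (d - 1)) := by
  have h := hC.mem_Icc (fun j => hx (π j)) (π.symm i)
  simp only [Equiv.apply_symm_apply, Equiv.sum_comp π x] at h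
  exact abs_sub_le_of_le_of_le (hC.mem_Icc hx i).1 (hC.mem_Icc hx i).2 h.1 h.2

end IsCopula

/-- If the maximal non-exchangeability `(d−1)/(d+1)` is attained at an ordered point `u`,
then `0 ≤ ũ_i := u_i − (d−1)/(d+1) ≤ 2/(d+1)` for all `i`, and
`Σ_{i = ⌈d/2⌉+1}^{d} ũ_i = (d−1)/(d+1)` (0-indexed, the sum runs over the `i` with
`⌈d/2⌉ = (d+1)/2 ≤ i ≤ d − 1`). -/
theorem max_point_necessary (d : ℕ) (hd : 2 ≤ d)
    (u : Fin d → ℝ) (hu : ∀ i, u i ∈ Set.Icc (0:ℝ) 1)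
    (hmono : ∀ i j : Fin d, i ≤ j → u i ≤ u j)
    (C : (Fin d → ℝ) → ℝ) (hC : IsCopula d C)
    (π : Equiv.Perm (Fin d))
    (hmax : |C u - C (u ∘ π)| = ((d : ℝ) - 1) / ((d : ℝ) + 1)) :
    (∀ i : Fin d, 0 ≤ u i - ((d : ℝ) - 1) / ((d : ℝ) + 1) ∧
      u i - ((d : ℝ) - 1) / ((d : ℝ) + 1) ≤ 2 / ((d : ℝ) + 1)) ∧
    ∑ i ∈ Finset.univ.filter (fun i : Fin d => (d + 1) / 2 ≤ (i : ℕ)),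
        (u i - ((d : ℝ) - 1) / ((d : ℝ) + 1)) = ((d : ℝ) - 1) / ((d : ℝ) + 1) := by
  set t : ℝ := ((d : ℝ) - 1) / ((d : ℝ) + 1) with ht
  set i₀ : Fin d := ⟨0, by omega⟩
  have hfrechet := hmax ▸ hC.abs_sub_comp_perm_le_sub hu π i₀
  have ht_le : ∀ i, t ≤ u i := fun i =>
    (hfrechet.trans (sub_le_self _ (le_max_left _ _))).trans
      (hmono i₀ i (Fin.le_def.2 (Nat.zero_le _)))
  set w : Fin d → ℝ := fun i => u i - t
  have hw0 : 0 ≤ w := fun i => sub_nonneg.2 (ht_le i)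
  have hw : Monotone w := fun i j hij => sub_le_sub_right (hmono i j hij) t
  have hlower : t ≤ ∑ i ∈ univ.filter (fun i : Fin d => (d + 1) / 2 ≤ (i : ℕ)), w i :=
    let k : Fin d := ⟨d - (d + 1) / 2, by omega⟩
    calc t = |C u - C (u ∘ π)| := hmax.symm
      _ ≤ ∑ i, |u i - u k| := hC.abs_sub_comp_perm_le hu π (u k)
      _ = ∑ i, |w i - w k| := by simp [w]
      _ ≤ _ := hw.sum_abs_sub_le_sum_upper_half hw0 k rfl
  have hupper : ∑ i ∈ univ.filter (fun i : Fin d => (d + 1) / 2 ≤ (i : ℕ)), w i ≤ t :=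
    calc _ ≤ ∑ i ∈ univ.erase i₀, w i :=
          sum_le_sum_of_subset_of_nonneg (fun i hi => by
            simp only [mem_filter_univ, mem_erase, ne_eq, Fin.ext_iff, mem_univ, and_true,
              i₀] at hi ⊢
            omega)
            fun i _ _ => hw0 i
      _ = ∑ i, u i - u i₀ - (d - 1) * t := by
          rw [sum_erase_eq_sub (mem_univ _)]
          simp only [w, sum_sub_distrib, sum_const, card_univ, Fintype.card_fin, nsmul_eq_mul]
          ring
      _ ≤ t := by
          have : ((d : ℝ) + 1) * t = d - 1 := by rw [ht]; field_simp
          linarith [le_max_right 0 (∑ i, u i - (d - 1))]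
  refine ⟨fun i => ⟨hw0 i, ?_⟩, le_antisymm hupper hlower⟩
  have : t + 2 / ((d : ℝ) + 1) = 1 := by rw [ht]; field_simp; ring
  linarith [(hu i).2]
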